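/- arXiv:1609.00242 — 3 statements merged into one kernel-verified Lean document; each statement's English description precedes it below -/
import Mathlib

section
/- If 𝔯_σ = 𝔠 then the splitting number 𝔰 is at most the cofinality of the continuum. -/
open Cardinal Set

/-- `S` splits the infinite set `B` if both `B ∩ S` and `B \ S` are infinite. -/
def Splits (S B : Set ℕ) : Prop := (B ∩ S).Infinite ∧ (B \ S).Infinite

/-- `𝔯_σ`: the least cardinality of a family `R` of infinite subsets of `ω` such that
no countable collection `{S n : n ∈ ω}` of subsets of `ω` splits every member of `R`. -/
noncomputable def reapingNumberSigma : Cardinal :=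
  sInf {c : Cardinal | ∃ R : Set (Set ℕ), (∀ B ∈ R, B.Infinite) ∧
    (∀ S : ℕ → Set ℕ, ∃ B ∈ R, ∀ n : ℕ, ¬ Splits (S n) B) ∧ #R = c}

/-- The splitting number `𝔰`. -/
noncomputable def splittingNumber : Cardinal :=
  sInf {c : Cardinal | ∃ F : Set (Set ℕ),
    (∀ B : Set ℕ, B.Infinite → ∃ S ∈ F, Splits S B) ∧ #F = c}

/-!
Well-order `Set ℕ` in type `𝔠` and fix a cofinal subset of size `cf 𝔠`. Each initial segment
has fewer than `𝔠 = 𝔯_σ` members, so countably many sets split all of its infinite members;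
collecting these countable families over the cofinal subset gives `cf 𝔠 · ℵ₀ = cf 𝔠` sets
splitting every infinite subset of `ℕ`.
-/

theorem Cardinal.exists_sUnion_eq_univ_of_aleph0_le (α : Type*) (hα : ℵ₀ ≤ #α) :
    ∃ A : Set (Set α), #A ≤ (#α).ord.cof ∧ (∀ a ∈ A, #a < #α) ∧ ⋃₀ A = Set.univ := by
  obtain ⟨_, _, hord⟩ := exists_ord_eq_type_lt α
  obtain ⟨U, hU, hUcard⟩ := Order.exists_cof_eq α
  refine ⟨Iic '' U, ?_, ?_, ?_⟩
  · rw [hord, Ordinal.cof_type, ← hUcard]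
    exact mk_image_le
  · rintro _ ⟨t, -, rfl⟩
    exact mk_Iic_lt t hord hα
  · rw [sUnion_image]
    exact isCofinal_iff_iUnion_Iic_eq_univ.1 hU

theorem splittingNumber_le_mk {F : Set (Set ℕ)}
    (hF : ∀ B : Set ℕ, B.Infinite → ∃ S ∈ F, Splits S B) : splittingNumber ≤ #F :=
  csInf_le' ⟨F, hF, rfl⟩

theorem exists_seq_splits_of_mk_lt_reapingNumberSigma {R : Set (Set ℕ)}
    (hR : ∀ B ∈ R, B.Infinite) (hlt : #R < reapingNumberSigma) :
    ∃ S : ℕ → Set ℕ, ∀ B ∈ R, ∃ n, Splits (S n) B := by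
  by_contra! hS
  exact (csInf_le' ⟨R, hR, hS, rfl⟩ : reapingNumberSigma ≤ #R).not_gt hlt

theorem splittingNumber_le_mk_mul_aleph0 {A : Set (Set (Set ℕ))}
    (hA : ∀ R ∈ A, #R < reapingNumberSigma) (hcover : ⋃₀ A = Set.univ) :
    splittingNumber ≤ #A * ℵ₀ := by
  have hsplit (R : A) : ∃ S : ℕ → Set ℕ, ∀ B ∈ {B ∈ R.1 | B.Infinite}, ∃ n, Splits (S n) B :=
    exists_seq_splits_of_mk_lt_reapingNumberSigma (fun _ hB => hB.2)
      ((mk_le_mk_of_subset (sep_subset _ _)).trans_lt (hA R R.2))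
  choose σ hσ using hsplit
  calc splittingNumber ≤ #(range fun p : A × ℕ => σ p.1 p.2) := by
        refine splittingNumber_le_mk fun B hB => ?_
        obtain ⟨R, hR, hBR⟩ := mem_sUnion.1 (hcover ▸ mem_univ B)
        obtain ⟨n, hn⟩ := hσ ⟨R, hR⟩ B ⟨hBR, hB⟩
        exact ⟨_, ⟨(⟨R, hR⟩, n), rfl⟩, hn⟩
    _ ≤ #(A × ℕ) := mk_range_le
    _ = #A * ℵ₀ := by simp

theorem splitting_le_cof_continuum_of_reapingSigma_eq_continuum
    (h : reapingNumberSigma = Cardinal.continuum) :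
    splittingNumber ≤ Cardinal.continuum.ord.cof := by
  obtain ⟨A, hAcard, hAsmall, hAcover⟩ :=
    exists_sUnion_eq_univ_of_aleph0_le (Set ℕ) (mk_set_nat ▸ aleph0_le_continuum)
  rw [mk_set_nat] at hAcard hAsmall
  have hcof : ℵ₀ ≤ continuum.ord.cof :=
    Ordinal.aleph0_le_cof_iff.2 (Ordinal.one_lt_cof_iff.2 (isSuccLimit_ord aleph0_le_continuum))
  calc splittingNumber ≤ #A * ℵ₀ := splittingNumber_le_mk_mul_aleph0 (h ▸ hAsmall) hAcover
    _ ≤ continuum.ord.cof * ℵ₀ := mul_le_mul_left hAcard _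
    _ = continuum.ord.cof := mul_aleph0_eq hcof
end

section
/- Assume 𝔠 is regular. Then the strong polarized relation (𝔠, ω) → (𝔠, ω)^{1,1}_2 holds if and only if 𝔯 < 𝔠, granted that 𝔯 < cf(κ) implies (κ,ω) → (κ,ω)^{1,1}_2 for all κ ≤ 𝔠 (the positive theorem above 𝔯). -/
open Cardinal Set

/-- The reaping number `𝔯`. -/
noncomputable def reapingNumber : Cardinal :=
  sInf {c : Cardinal | ∃ R : Set (Set ℕ), (∀ B ∈ R, B.Infinite) ∧
    (∀ S : Set ℕ, S.Infinite → ∃ B ∈ R, ¬ Splits S B) ∧ #R = c}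

/-- The strong polarized relation `(κ, ω) → (κ, ω)^{1,1}_2`. -/
def PolarizedRel (κ : Cardinal) : Prop :=
  ∀ c : κ.ord.ToType × ℕ → Bool,
    ∃ A : Set κ.ord.ToType, ∃ B : Set ℕ, #A = κ ∧ B.Infinite ∧
      ∃ v : Bool, ∀ a ∈ A, ∀ b ∈ B, c (a, b) = v

/-!
If `𝔯 < 𝔠`, regularity gives `𝔯 < cf 𝔠` and the positive theorem applies. Conversely, if
`𝔠 ≤ 𝔯`, enumerate the subsets of `ω` as `(B_β)_{β < 𝔠}`. Fewer than `𝔯` sets precede each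
`α`, so some `S_α` splits every infinite `B_β` with `β < α`. The colouring `(α, n) ↦ [n ∈ S_α]`
has no homogeneous `A × B_β` with `|A| = 𝔠`: such an `A` is unbounded, so it contains some
`α > β`, and `S_α` splits `B_β`.
-/

lemma Splits.not_forall_decide_eq {S B : Set ℕ} [DecidablePred (· ∈ S)] (h : Splits S B)
    (v : Bool) : ¬ ∀ b ∈ B, decide (b ∈ S) = v := by
  obtain ⟨n, hnB, hnS⟩ := h.1.nonempty
  obtain ⟨m, hmB, hmS⟩ := h.2.nonempty
  intro hv
  have := (hv n hnB).trans (hv m hmB).symm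
  simp [hnS, hmS] at this

lemma exists_splits_of_mk_lt_reapingNumber {R : Set (Set ℕ)} (hR : ∀ B ∈ R, B.Infinite)
    (hlt : #R < reapingNumber) : ∃ S : Set ℕ, S.Infinite ∧ ∀ B ∈ R, Splits S B := by
  by_contra! h
  exact hlt.not_ge (csInf_le' ⟨R, hR, h, rfl⟩)

lemma not_bddAbove_of_mk_eq {κ : Cardinal} (hκ : ℵ₀ ≤ κ) {A : Set κ.ord.ToType}
    (hA : #A = κ) : ¬ BddAbove A := by
  rintro ⟨β, hβ⟩
  have hIic : #(Iic β) < κ := by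
    rw [← Iio_insert]
    exact mk_insert_le.trans_lt
      (add_lt_of_lt hκ (by simpa using mk_Iio_lt β) (one_lt_aleph0.trans_le hκ))
  exact (hA ▸ mk_le_mk_of_subset hβ).not_gt hIic

lemma PolarizedRel.of_lift_eq {κ : Cardinal.{u}} {μ : Cardinal.{v}}
    (hκμ : lift.{v} κ = lift.{u} μ) (h : PolarizedRel κ) : PolarizedRel μ := by
  obtain ⟨g⟩ : Nonempty (κ.ord.ToType ≃ μ.ord.ToType) := lift_mk_eq'.1 (by simpa using hκμ)
  intro c
  obtain ⟨A, B, hA, hB, v, hv⟩ := h fun p => c (g p.1, p.2)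
  refine ⟨g '' A, B, lift_injective.{u} ?_, hB, v, ?_⟩
  · exact (lift_mk_eq'.2 ⟨Equiv.Set.image g A g.injective⟩).symm.trans
      ((congrArg lift hA).trans hκμ)
  · rintro _ ⟨a, ha, rfl⟩ b hb
    exact hv a ha b hb

lemma polarizedRel_continuum_iff : PolarizedRel continuum.{u} ↔ PolarizedRel continuum.{v} :=
  ⟨.of_lift_eq (by simp), .of_lift_eq (by simp)⟩

lemma isRegular_continuum_iff : continuum.{u}.IsRegular ↔ continuum.{v}.IsRegular := by
  rw [← isRegular_lift_iff.{v}, lift_continuum, ← isRegular_lift_iff.{u} (κ := continuum.{v}),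
    lift_continuum]

lemma not_polarizedRel_continuum_of_le_reapingNumber (h : continuum.{0} ≤ reapingNumber) :
    ¬ PolarizedRel continuum.{0} := by
  classical
  intro hpol
  obtain ⟨e⟩ : Nonempty (continuum.{0}.ord.ToType ≃ Set ℕ) := Cardinal.eq.1 (by simp [mk_set])
  have hsplit (α : continuum.{0}.ord.ToType) : ∃ S : Set ℕ, S.Infinite ∧
      ∀ B ∈ {B : Set ℕ | B.Infinite} ∩ e '' Iio α, Splits S B :=
    exists_splits_of_mk_lt_reapingNumber (fun B hB => hB.1) <|
      ((mk_le_mk_of_subset inter_subset_right).trans_lt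
        (mk_image_le.trans_lt (by simpa using mk_Iio_lt α))).trans_le h
  choose S _ hS using hsplit
  obtain ⟨A, B, hA, hB, v, hv⟩ := hpol fun p => decide (p.2 ∈ S p.1)
  obtain ⟨α, hαA, hlt⟩ :=
    not_bddAbove_iff.1 (not_bddAbove_of_mk_eq aleph0_le_continuum hA) (e.symm B)
  exact (hS α B ⟨hB, e.symm B, hlt, e.apply_symm_apply B⟩).not_forall_decide_eq v (hv α hαA)

theorem polarized_continuum_iff_reaping_lt
    (hreg : Cardinal.continuum.IsRegular)
    (habove : ∀ κ : Cardinal, reapingNumber < κ.ord.cof → κ ≤ Cardinal.continuum →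
      PolarizedRel κ) :
    PolarizedRel Cardinal.continuum ↔ reapingNumber < Cardinal.continuum := by
  constructor
  · intro hpol
    by_contra! hle
    exact not_polarizedRel_continuum_of_le_reapingNumber hle
      (polarizedRel_continuum_iff.{_, 0}.1 hpol)
  · intro hlt
    refine polarizedRel_continuum_iff.1 (habove 𝔠 ?_ le_rfl)
    rwa [(isRegular_continuum_iff.1 hreg).cof_ord]
end

section
/- If there exists a Sierpiński set of cardinality ℵ₁ in 2^ω (an uncountable set meeting every null set in a countable set), then the strong polarized relation (ℵ₁, ω) → (ℵ₁, ω)^{1,1}_2 fails. -/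
open MeasureTheory Set Cardinal

/-- `μ` is the product probability measure on Cantor space `2^ω`. -/
def IsCoinFlipMeasure (μ : Measure (ℕ → Bool)) : Prop :=
  μ Set.univ = 1 ∧
    ∀ (s : Finset ℕ) (f : ℕ → Bool),
      μ {x | ∀ n ∈ s, x n = f n} = (1 / 2 : ENNReal) ^ s.card

/-!
Enumerate the Sierpiński set as `⟨x_α : α < ω₁⟩` and colour `(α, n)` by `x_α n`. If this colouring
were constant, say equal to `v`, on `A × B` with `B` infinite, then every `x_α` with `α ∈ A` lies
in the null set of sequences equal to `v` on `B`; a Sierpiński set meets it in a countable set,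
so `A` is countable.
-/

theorem IsCoinFlipMeasure.measure_eqOn_infinite_eq_zero {μ : Measure (ℕ → Bool)}
    (hμ : IsCoinFlipMeasure μ) {B : Set ℕ} (hB : B.Infinite) (f : ℕ → Bool) :
    μ {x | ∀ n ∈ B, x n = f n} = 0 := by
  have hle : ∀ k : ℕ, μ {x | ∀ n ∈ B, x n = f n} ≤ (1 / 2 : ENNReal) ^ k := by
    intro k
    obtain ⟨F, hFB, rfl⟩ := hB.exists_subset_card_eq k
    calc μ {x | ∀ n ∈ B, x n = f n} ≤ μ {x | ∀ n ∈ F, x n = f n} :=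
          measure_mono fun x hx n hn => hx n (hFB hn)
      _ = (1 / 2 : ENNReal) ^ F.card := hμ.2 F f
  exact le_antisymm
    (ge_of_tendsto' (ENNReal.tendsto_pow_atTop_nhds_zero_of_lt_one (by norm_num)) hle) zero_le

theorem countable_of_eqOn_infinite_of_sierpinski {μ : Measure (ℕ → Bool)}
    (hμ : IsCoinFlipMeasure μ) {S : Set (ℕ → Bool)}
    (hSier : ∀ N : Set (ℕ → Bool), μ N = 0 → (S ∩ N).Countable)
    {ι : Type*} {x : ι → ℕ → Bool} (hx : Function.Injective x) (hxS : ∀ i, x i ∈ S)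
    {A : Set ι} {B : Set ℕ} (hB : B.Infinite) {v : Bool}
    (hv : ∀ a ∈ A, ∀ b ∈ B, x a b = v) : A.Countable :=
  MapsTo.countable_of_injOn (t := S ∩ {y | ∀ n ∈ B, y n = v})
    (fun a ha => ⟨hxS a, hv a ha⟩) hx.injOn
    (hSier _ (hμ.measure_eqOn_infinite_eq_zero hB fun _ => v))

theorem sierpinski_set_gives_neg_polarized_aleph_one
    (μ : Measure (ℕ → Bool)) (hμ : IsCoinFlipMeasure μ)
    (S : Set (ℕ → Bool)) (hS : #S = Cardinal.aleph 1)
    (hSier : ∀ N : Set (ℕ → Bool), μ N = 0 → (S ∩ N).Countable) :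
    ∃ c : (Cardinal.aleph 1).ord.ToType × ℕ → Bool,
      ∀ A : Set (Cardinal.aleph 1).ord.ToType, ∀ B : Set ℕ,
        #A = Cardinal.aleph 1 → B.Infinite →
          ¬ ∃ v : Bool, ∀ a ∈ A, ∀ b ∈ B, c (a, b) = v := by
  obtain ⟨e⟩ : Nonempty ((Cardinal.aleph.{u_1} 1).ord.ToType ≃ S) := by
    rw [← Cardinal.lift_mk_eq', Cardinal.mk_ord_toType, hS]
    simp
  refine ⟨fun p => (e p.1 : ℕ → Bool) p.2, fun A B hA hB ⟨v, hv⟩ => ?_⟩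
  have hA_countable : A.Countable :=
    countable_of_eqOn_infinite_of_sierpinski hμ hSier
      (Subtype.val_injective.comp e.injective) (fun a => (e a).2) hB hv
  exact (hA ▸ hA_countable.le_aleph0).not_gt Cardinal.aleph0_lt_aleph_one
end
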